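/- If u ∧ Φ = 0 pointwise (u, Φ : ℝ² → ℝ² with u₁Φ₂ = u₂Φ₁ everywhere) and rot u ∈ L², then ⟨u ∧ Φ, rot u⟩_{L²} = 0; combined with the previous identity this gives: if u, Φ are both everywhere orthogonal to a vector field ∇b that never vanishes on an open set 𝒪, and Φ is divergence-free and supported in 𝒪, then ∫_𝒪 (u · ∇_h u) · Φ dx = 0. -/

import Mathlib

/-!
Where `∇b ≠ 0`, two vectors orthogonal to `∇b` are parallel, so `u ∧ Φ = 0` on `𝒪`, and also off `𝒪`
where `Φ = 0`. The pointwise identity `(u·∇u)·Φ = ½ ∇|u|²·Φ + (u ∧ Φ) rot u` then reduces the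
convection term to `½ ∫ ∇|u|²·Φ`, which vanishes after integrating by parts since `div Φ = 0`.
-/

open MeasureTheory

local notation "E2" => EuclideanSpace ℝ (Fin 2)

/-- Partial derivative in the `i`-th coordinate direction of a scalar function on `ℝ²`. -/
noncomputable def pd (i : Fin 2) (f : E2 → ℝ) (x : E2) : ℝ :=
  fderiv ℝ f x (EuclideanSpace.single i 1)

lemma mul_eq_mul_of_orthogonal_of_ne_zero {R : Type*} [CommRing R] [IsDomain R]
    {a₀ a₁ c₀ c₁ n₀ n₁ : R} (hn : ¬(n₀ = 0 ∧ n₁ = 0))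
    (ha : a₀ * n₀ + a₁ * n₁ = 0) (hc : c₀ * n₀ + c₁ * n₁ = 0) :
    a₀ * c₁ = a₁ * c₀ := by
  have h₀ : (a₀ * c₁ - a₁ * c₀) * n₀ = 0 := by linear_combination c₁ * ha - a₁ * hc
  have h₁ : (a₀ * c₁ - a₁ * c₀) * n₁ = 0 := by linear_combination a₀ * hc - c₀ * ha
  by_contra hne
  have hsub : a₀ * c₁ - a₁ * c₀ ≠ 0 := sub_ne_zero.mpr hne
  exact hn ⟨(mul_eq_zero.mp h₀).resolve_left hsub, (mul_eq_zero.mp h₁).resolve_left hsub⟩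

section PartialDerivative

variable {f g : E2 → ℝ}

lemma pd_mul (hf : Differentiable ℝ f) (hg : Differentiable ℝ g) (i : Fin 2) (x : E2) :
    pd i (fun y => f y * g y) x = f x * pd i g x + g x * pd i f x := by
  simp only [pd, fderiv_fun_mul (hf x) (hg x), add_apply, smul_apply,
    smul_eq_mul]

lemma pd_add (hf : Differentiable ℝ f) (hg : Differentiable ℝ g) (i : Fin 2) (x : E2) :
    pd i (fun y => f y + g y) x = pd i f x + pd i g x := by
  simp only [pd, fderiv_fun_add (hf x) (hg x), add_apply]

lemma pd_mul_self_add_mul_self (hf : Differentiable ℝ f) (hg : Differentiable ℝ g)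
    (i : Fin 2) (x : E2) :
    pd i (fun y => f y * f y + g y * g y) x = 2 * (f x * pd i f x + g x * pd i g x) := by
  rw [pd_add (hf.fun_mul hf) (hg.fun_mul hg), pd_mul hf hf, pd_mul hg hg]
  ring

lemma continuous_pd (hf : ContDiff ℝ 1 f) (i : Fin 2) : Continuous (pd i f) :=
  (hf.continuous_fderiv one_ne_zero).clm_apply continuous_const

lemma HasCompactSupport.pd (hf : HasCompactSupport f) (i : Fin 2) :
    HasCompactSupport (pd i f) :=
  hf.fderiv_apply ℝ (EuclideanSpace.single i 1)

lemma integrable_pd_mul (hf : ContDiff ℝ 1 f) (hg : Continuous g) (hgc : HasCompactSupport g)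
    (i : Fin 2) : Integrable (fun x => pd i f x * g x) :=
  ((continuous_pd hf i).mul hg).integrable_of_hasCompactSupport hgc.mul_left

lemma integrable_mul_pd (hf : Continuous f) (hg : ContDiff ℝ 1 g) (hgc : HasCompactSupport g)
    (i : Fin 2) : Integrable (fun x => f x * pd i g x) :=
  (hf.mul (continuous_pd hg i)).integrable_of_hasCompactSupport (hgc.pd i).mul_left

lemma integral_pd_mul_eq_neg_integral_mul_pd (hf : ContDiff ℝ 1 f) (hg : ContDiff ℝ 1 g)
    (hgc : HasCompactSupport g) (i : Fin 2) :
    ∫ x, pd i f x * g x = -∫ x, f x * pd i g x := by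
  have hint_mul : Integrable (fun x => f x * g x) :=
    (hf.continuous.mul hg.continuous).integrable_of_hasCompactSupport hgc.mul_left
  simp only [pd]
  rw [integral_mul_fderiv_eq_neg_fderiv_mul_of_integrable
    (integrable_pd_mul hf hg.continuous hgc i) (integrable_mul_pd hf.continuous hg hgc i) hint_mul
    (fun x _ => hf.differentiable one_ne_zero x) (fun x _ => hg.differentiable one_ne_zero x),
    neg_neg]

lemma integral_pd_mul_add_pd_mul_eq_zero {φ₀ φ₁ : E2 → ℝ} (hf : ContDiff ℝ 1 f)
    (hφ₀ : ContDiff ℝ 1 φ₀) (hφ₁ : ContDiff ℝ 1 φ₁)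
    (hφ₀c : HasCompactSupport φ₀) (hφ₁c : HasCompactSupport φ₁)
    (hdiv : ∀ x, pd 0 φ₀ x + pd 1 φ₁ x = 0) :
    ∫ x, (pd 0 f x * φ₀ x + pd 1 f x * φ₁ x) = 0 := by
  rw [integral_add (integrable_pd_mul hf hφ₀.continuous hφ₀c 0)
      (integrable_pd_mul hf hφ₁.continuous hφ₁c 1),
    integral_pd_mul_eq_neg_integral_mul_pd hf hφ₀ hφ₀c,
    integral_pd_mul_eq_neg_integral_mul_pd hf hφ₁ hφ₁c, ← neg_add,
    ← integral_add (integrable_mul_pd hf.continuous hφ₀ hφ₀c 0)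
      (integrable_mul_pd hf.continuous hφ₁ hφ₁c 1), neg_eq_zero]
  simp only [← mul_add, hdiv, mul_zero, integral_zero]

end PartialDerivative

theorem convection_term_vanishes_general
    (b : E2 → ℝ) (𝒪 : Set E2)
    (u Φ : E2 → E2) (hu : ContDiff ℝ 1 u) (hΦ : ContDiff ℝ 1 Φ)
    (hΦc : HasCompactSupport Φ) (hΦsupp : tsupport Φ ⊆ 𝒪)
    (hΦdiv : ∀ x, pd 0 (fun y => Φ y 0) x + pd 1 (fun y => Φ y 1) x = 0)
    (hgrad_ne : ∀ x ∈ 𝒪, ¬(pd 0 b x = 0 ∧ pd 1 b x = 0))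
    (hu_orth : ∀ x ∈ 𝒪, u x 0 * pd 0 b x + u x 1 * pd 1 b x = 0)
    (hΦ_orth : ∀ x ∈ 𝒪, Φ x 0 * pd 0 b x + Φ x 1 * pd 1 b x = 0) :
    ((∀ x, u x 0 * Φ x 1 = u x 1 * Φ x 0) →
      (∫ x : E2, (u x 0 * Φ x 1 - u x 1 * Φ x 0)
        * (pd 0 (fun y => u y 1) x - pd 1 (fun y => u y 0) x)) = 0)
    ∧ (∫ x in 𝒪,
        ((u x 0 * pd 0 (fun y => u y 0) x + u x 1 * pd 1 (fun y => u y 0) x) * Φ x 0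
          + (u x 0 * pd 0 (fun y => u y 1) x + u x 1 * pd 1 (fun y => u y 1) x) * Φ x 1)) = 0 := by
  have hui : ∀ i, ContDiff ℝ 1 (fun x => u x i) := contDiff_euclidean.mp hu
  have hΦi : ∀ i, ContDiff ℝ 1 (fun x => Φ x i) := contDiff_euclidean.mp hΦ
  have hΦic : ∀ i, HasCompactSupport (fun x => Φ x i) := fun i =>
    hΦc.comp_left (g := fun v : E2 => v i) rfl
  have hΦ_off : ∀ x ∉ 𝒪, Φ x = 0 := fun x hx =>
    image_eq_zero_of_notMem_tsupport fun hmem => hx (hΦsupp hmem)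
  have hwedge : ∀ x, u x 0 * Φ x 1 = u x 1 * Φ x 0 := by
    intro x
    by_cases hx : x ∈ 𝒪
    · exact mul_eq_mul_of_orthogonal_of_ne_zero (hgrad_ne x hx) (hu_orth x hx) (hΦ_orth x hx)
    · simp [hΦ_off x hx]
  refine ⟨fun _ => by simp only [hwedge, sub_self, zero_mul, integral_zero], ?_⟩
  set h : E2 → ℝ := fun x => u x 0 * u x 0 + u x 1 * u x 1
  have hdiff : ∀ i, Differentiable ℝ (fun x => u x i) := fun i =>
    (hui i).differentiable one_ne_zero
  calc _ = ∫ x in 𝒪, (pd 0 h x * Φ x 0 + pd 1 h x * Φ x 1) / 2 := by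
          congr 1 with x
          rw [pd_mul_self_add_mul_self (hdiff 0) (hdiff 1),
            pd_mul_self_add_mul_self (hdiff 0) (hdiff 1)]
          linear_combination (pd 0 (fun y => u y 1) x - pd 1 (fun y => u y 0) x) * hwedge x
    _ = ∫ x, (pd 0 h x * Φ x 0 + pd 1 h x * Φ x 1) / 2 :=
          setIntegral_eq_integral_of_forall_compl_eq_zero fun x hx => by simp [hΦ_off x hx]
    _ = 0 := by
          rw [integral_div, integral_pd_mul_add_pd_mul_eq_zero ((hui 0).mul (hui 0) |>.add
            ((hui 1).mul (hui 1))) (hΦi 0) (hΦi 1) (hΦic 0) (hΦic 1) hΦdiv, zero_div]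

/-- If `u ∧ Φ = 0` pointwise then `⟨u ∧ Φ, rot u⟩_{L²} = 0`; consequently, on an open set `𝒪`
where `∇b` never vanishes, if `u` and `Φ` are everywhere orthogonal to `∇b`, and `Φ` is
divergence-free and supported in `𝒪`, then `∫_𝒪 (u·∇_h u)·Φ dx = 0`. -/
theorem convection_term_vanishes
    (b : E2 → ℝ) (hb : ContDiff ℝ 1 b) (𝒪 : Set E2) (hO : IsOpen 𝒪)
    (u Φ : E2 → E2) (hu : ContDiff ℝ 1 u) (hΦ : ContDiff ℝ 1 Φ)
    (hΦc : HasCompactSupport Φ) (hΦsupp : tsupport Φ ⊆ 𝒪)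
    (hΦdiv : ∀ x, pd 0 (fun y => Φ y 0) x + pd 1 (fun y => Φ y 1) x = 0)
    (hgrad_ne : ∀ x ∈ 𝒪, ¬(pd 0 b x = 0 ∧ pd 1 b x = 0))
    (hu_orth : ∀ x ∈ 𝒪, u x 0 * pd 0 b x + u x 1 * pd 1 b x = 0)
    (hΦ_orth : ∀ x ∈ 𝒪, Φ x 0 * pd 0 b x + Φ x 1 * pd 1 b x = 0) :
    ((∀ x, u x 0 * Φ x 1 = u x 1 * Φ x 0) →
      (∫ x : E2, (u x 0 * Φ x 1 - u x 1 * Φ x 0)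
        * (pd 0 (fun y => u y 1) x - pd 1 (fun y => u y 0) x)) = 0)
    ∧ (∫ x in 𝒪,
        ((u x 0 * pd 0 (fun y => u y 0) x + u x 1 * pd 1 (fun y => u y 0) x) * Φ x 0
          + (u x 0 * pd 0 (fun y => u y 1) x + u x 1 * pd 1 (fun y => u y 1) x) * Φ x 1)) = 0 :=
  convection_term_vanishes_general b 𝒪 u Φ hu hΦ hΦc hΦsupp hΦdiv hgrad_ne hu_orth hΦ_orth
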